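/- For every real m ≥ 0 and every real x > 0, V_m is differentiable at x and satisfies the differential equation V_m′(x) = 2x (V_m(x) − V_{m−1}(x)), where for m = 0 one interprets V_{−1}(x) = 1/x. -/

import Mathlib

/-!
Differentiating under the integral sign gives
`V_m'(x) = -x / Γ(m+1) * ∫ u^m e^{-u} (x² + u)^{-3/2} du`.
Integrating `d/du [u^m e^{-u} (x² + u)^{-1/2}]` over `(0, ∞)` rewrites this last integral as
`2 (m ∫ u^{m-1} e^{-u} (x² + u)^{-1/2} du - Γ(m+1) V_m(x) + 0^m / x)`, and
`m / Γ(m+1) = 1 / Γ(m)` turns the first term into `V_{m-1}`; for `m = 0` that term vanishes and the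
boundary value `0^0 / x = 1/x` at `u = 0` is exactly `V_{-1}(x)`.
-/

open MeasureTheory Real Set

/-- The one-dimensional regularized Coulomb potential `V_m(x)`. -/
noncomputable def V (m x : ℝ) : ℝ :=
  (1 / Real.Gamma (m + 1)) *
    ∫ u in Set.Ioi (0:ℝ), u ^ m * Real.exp (-u) / Real.sqrt (x ^ 2 + u)

/-- `V_m(x)` extended by the convention `V_{-1}(x) = 1/x`. -/
noncomputable def Vext (m x : ℝ) : ℝ := if m = -1 then 1 / x else V m x

open Filter Topology

lemma integrableOn_rpow_mul_exp_neg {p : ℝ} (hp : -1 < p) :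
    IntegrableOn (fun u : ℝ => u ^ p * exp (-u)) (Ioi 0) := by
  simpa using integrableOn_rpow_mul_exp_neg_rpow hp one_pos

lemma integrableOn_rpow_mul_exp_neg_div_sqrt_pow {p c : ℝ} (hp : -1 < p) (hc : 0 < c) (n : ℕ) :
    IntegrableOn (fun u : ℝ => u ^ p * exp (-u) / sqrt (c + u) ^ n) (Ioi 0) := by
  refine ((integrableOn_rpow_mul_exp_neg hp).mul_const (sqrt c ^ n)⁻¹).mono'
    (Measurable.aestronglyMeasurable (by fun_prop)) ?_
  refine (ae_restrict_iff' measurableSet_Ioi).2 (Eventually.of_forall fun u (hu : 0 < u) => ?_)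
  have hsqrt : sqrt c ≤ sqrt (c + u) := sqrt_le_sqrt (by linarith)
  rw [norm_of_nonneg (by positivity), div_eq_mul_inv]
  gcongr

lemma hasDerivAt_div_sqrt_sq_add (a : ℝ) {u : ℝ} (hu : 0 < u) (y : ℝ) :
    HasDerivAt (fun y : ℝ => a / sqrt (y ^ 2 + u)) (-(y * a / sqrt (y ^ 2 + u) ^ 3)) y := by
  have hpos : 0 < y ^ 2 + u := by positivity
  have hsqrt : HasDerivAt (fun y : ℝ => sqrt (y ^ 2 + u)) (2 * y / (2 * sqrt (y ^ 2 + u))) y := by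
    simpa using ((hasDerivAt_pow 2 y).add_const u).sqrt hpos.ne'
  refine ((hasDerivAt_const y a).div hsqrt (sqrt_pos.2 hpos).ne').congr_deriv ?_
  field_simp
  ring

lemma mul_div_sqrt_sq_add_pow_three_le {a u y : ℝ} (ha : 0 ≤ a) (hu : 0 ≤ u) (hy : 0 < y) :
    y * a / sqrt (y ^ 2 + u) ^ 3 ≤ a / y ^ 2 :=
  calc y * a / sqrt (y ^ 2 + u) ^ 3
      ≤ y * a / y ^ 3 := by
        gcongr
        exact le_sqrt_of_sq_le (by linarith)
    _ = a / y ^ 2 := by field_simp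

lemma hasDerivAt_integral_rpow_mul_exp_neg_div_sqrt {m x : ℝ} (hm : -1 < m) (hx : 0 < x) :
    HasDerivAt (fun y => ∫ u in Ioi 0, u ^ m * exp (-u) / sqrt (y ^ 2 + u))
      (-x * ∫ u in Ioi 0, u ^ m * exp (-u) / sqrt (x ^ 2 + u) ^ 3) x := by
  have hbound : ∀ᵐ u ∂volume.restrict (Ioi 0), ∀ y ∈ Ioi (x / 2),
      ‖-(y * (u ^ m * exp (-u)) / sqrt (y ^ 2 + u) ^ 3)‖ ≤ 4 / x ^ 2 * (u ^ m * exp (-u)) := by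
    refine (ae_restrict_iff' measurableSet_Ioi).2 (Eventually.of_forall fun u (hu : 0 < u) => ?_)
    intro y (hy : x / 2 < y)
    have hy0 : 0 < y := by linarith
    rw [norm_neg, norm_of_nonneg (by positivity)]
    calc y * (u ^ m * exp (-u)) / sqrt (y ^ 2 + u) ^ 3
        ≤ u ^ m * exp (-u) / y ^ 2 := mul_div_sqrt_sq_add_pow_three_le (by positivity) hu.le hy0
      _ ≤ u ^ m * exp (-u) / (x / 2) ^ 2 := by gcongr
      _ = 4 / x ^ 2 * (u ^ m * exp (-u)) := by ring
  have hint : IntegrableOn (fun u => u ^ m * exp (-u) / sqrt (x ^ 2 + u)) (Ioi 0) := by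
    simpa using integrableOn_rpow_mul_exp_neg_div_sqrt_pow hm (pow_pos hx 2) 1
  have hdiff : ∀ᵐ u ∂volume.restrict (Ioi 0), ∀ y ∈ Ioi (x / 2),
      HasDerivAt (fun y => u ^ m * exp (-u) / sqrt (y ^ 2 + u))
        (-(y * (u ^ m * exp (-u)) / sqrt (y ^ 2 + u) ^ 3)) y :=
    (ae_restrict_iff' measurableSet_Ioi).2
      (Eventually.of_forall fun u hu y _ => hasDerivAt_div_sqrt_sq_add _ hu y)
  have hderiv := (hasDerivAt_integral_of_dominated_loc_of_deriv_le
    (F := fun y u => u ^ m * exp (-u) / sqrt (y ^ 2 + u)) (Ioi_mem_nhds (half_lt_self hx))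
    (Eventually.of_forall fun y => (Measurable.aestronglyMeasurable (by fun_prop)))
    hint (Measurable.aestronglyMeasurable (by fun_prop)) hbound
    ((integrableOn_rpow_mul_exp_neg hm).const_mul _) hdiff).2
  refine hderiv.congr_deriv ?_
  rw [← integral_const_mul]
  congr 1 with u
  ring

lemma hasDerivAt_rpow_mul_exp_neg_div_sqrt {m c u : ℝ} (hc : 0 ≤ c) (hu : 0 < u) :
    HasDerivAt (fun u => u ^ m * exp (-u) / sqrt (c + u))
      (m * (u ^ (m - 1) * exp (-u) / sqrt (c + u)) - u ^ m * exp (-u) / sqrt (c + u)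
        - u ^ m * exp (-u) / sqrt (c + u) ^ 3 / 2) u := by
  have hpos : 0 < c + u := by linarith
  have hnum : HasDerivAt (fun u => u ^ m * exp (-u))
      (m * u ^ (m - 1) * exp (-u) - u ^ m * exp (-u)) u := by
    refine ((hasDerivAt_rpow_const (Or.inl hu.ne')).mul (hasDerivAt_neg u).exp).congr_deriv ?_
    ring
  have hden : HasDerivAt (fun u => sqrt (c + u)) (1 / (2 * sqrt (c + u))) u := by
    simpa using ((hasDerivAt_id u).const_add c).sqrt hpos.ne'
  refine (hnum.div hden (sqrt_pos.2 hpos).ne').congr_deriv ?_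
  field_simp

lemma tendsto_rpow_mul_exp_neg_div_sqrt_atTop (p c : ℝ) :
    Tendsto (fun u => u ^ p * exp (-u) / sqrt (c + u)) atTop (𝓝 0) :=
  Tendsto.div_atTop (by simpa using tendsto_rpow_mul_exp_neg_mul_atTop_nhds_zero p 1 one_pos)
    (tendsto_sqrt_atTop.comp (tendsto_atTop_add_const_left _ c tendsto_id))

/-- The boundary term `0 ^ m / √c` (a real power) is `1 / √c` for `m = 0` and `0` for `m > 0`. -/
lemma integral_rpow_mul_exp_neg_div_sqrt_pow_three {m c : ℝ} (hm : 0 ≤ m) (hc : 0 < c) :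
    (∫ u in Ioi 0, u ^ m * exp (-u) / sqrt (c + u) ^ 3) / 2 =
      m * (∫ u in Ioi 0, u ^ (m - 1) * exp (-u) / sqrt (c + u))
        - (∫ u in Ioi 0, u ^ m * exp (-u) / sqrt (c + u)) + 0 ^ m / sqrt c := by
  have hint : ∀ {p : ℝ}, -1 < p → IntegrableOn (fun u => u ^ p * exp (-u) / sqrt (c + u)) (Ioi 0) :=
    fun hp => by simpa using integrableOn_rpow_mul_exp_neg_div_sqrt_pow hp hc 1
  have hint₀ : IntegrableOn (fun u => u ^ m * exp (-u) / sqrt (c + u)) (Ioi 0) :=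
    hint (by linarith)
  have hint₁ : IntegrableOn (fun u => m * (u ^ (m - 1) * exp (-u) / sqrt (c + u))) (Ioi 0) := by
    rcases hm.eq_or_lt with rfl | hm
    · simp
    · exact (hint (by linarith)).const_mul m
  have hint₃ : IntegrableOn (fun u => u ^ m * exp (-u) / sqrt (c + u) ^ 3 / 2) (Ioi 0) :=
    (integrableOn_rpow_mul_exp_neg_div_sqrt_pow (by linarith) hc 3).div_const 2
  have hcont : ContinuousWithinAt (fun u => u ^ m * exp (-u) / sqrt (c + u)) (Ici 0) 0 :=
    (((continuousAt_rpow_const 0 m (Or.inr hm)).mul (by fun_prop)).div (by fun_prop)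
      (by simpa using (sqrt_pos.2 hc).ne')).continuousWithinAt
  have hint₁₀ : IntegrableOn (fun u => m * (u ^ (m - 1) * exp (-u) / sqrt (c + u))
      - u ^ m * exp (-u) / sqrt (c + u)) (Ioi 0) := hint₁.sub hint₀
  have ibp := integral_Ioi_of_hasDerivAt_of_tendsto hcont
    (fun u hu => hasDerivAt_rpow_mul_exp_neg_div_sqrt hc.le hu) (hint₁₀.sub hint₃)
    (tendsto_rpow_mul_exp_neg_div_sqrt_atTop m c)
  rw [integral_sub hint₁₀ hint₃, integral_sub hint₁ hint₀, integral_const_mul,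
    integral_div] at ibp
  simp only [neg_zero, exp_zero, mul_one, add_zero] at ibp
  linarith

/-- For `m = 0` the integral diverges (and takes the junk value `0`), but it is multiplied by `m = 0`. -/
lemma Vext_sub_one {m : ℝ} (hm : 0 ≤ m) (x : ℝ) :
    Vext (m - 1) x = (m * (∫ u in Ioi 0, u ^ (m - 1) * exp (-u) / sqrt (x ^ 2 + u)) + 0 ^ m / x)
      / Gamma (m + 1) := by
  rcases hm.eq_or_lt with rfl | hm
  · simp [Vext]
  · rw [Vext, if_neg (by intro h; linarith), V, sub_add_cancel, Gamma_add_one hm.ne',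
      zero_rpow hm.ne', zero_div, add_zero]
    field_simp

theorem V_deriv (m x : ℝ) (hm : 0 ≤ m) (hx : 0 < x) :
    HasDerivAt (fun y => V m y) (2 * x * (V m x - Vext (m - 1) x)) x := by
  have hibp := integral_rpow_mul_exp_neg_div_sqrt_pow_three hm (pow_pos hx 2)
  rw [sqrt_sq hx.le] at hibp
  refine ((hasDerivAt_integral_rpow_mul_exp_neg_div_sqrt (by linarith) hx).const_mul
    (1 / Gamma (m + 1))).congr_deriv ?_
  have hΓ : Gamma (m + 1) ≠ 0 := (Gamma_pos_of_pos (by linarith)).ne'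
  rw [Vext_sub_one hm, V]
  field_simp [hx.ne'] at hibp ⊢
  linear_combination -hibp
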